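/- Let S, C be convex bodies in R^n with S an n-simplex. If S is complete with respect to C and R(S,C) = n·s(C)·r(S,C), then R(S,C)/D(S,C) = n(s(C)+1)/(2(n+1)), i.e., S attains equality in the generalized Bohnenblust inequality. -/

import Mathlib

open Pointwise

/-- A convex body: compact, convex, with nonempty interior. -/
def IsBody {n : ℕ} (K : Set (Fin n → ℝ)) : Prop :=
  Convex ℝ K ∧ IsCompact K ∧ (interior K).Nonempty

/-- Circumradius of `K` w.r.t. `C`: smallest `ρ > 0` with `K` contained in a translate of `ρ • C`. -/
noncomputable def circR {n : ℕ} (K C : Set (Fin n → ℝ)) : ℝ :=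
  sInf {ρ : ℝ | 0 < ρ ∧ ∃ t : Fin n → ℝ, K ⊆ t +ᵥ ρ • C}

/-- Inradius of `K` w.r.t. `C`: largest `ρ ≥ 0` with a translate of `ρ • C` inside `K`. -/
noncomputable def inrad {n : ℕ} (K C : Set (Fin n → ℝ)) : ℝ :=
  sSup {ρ : ℝ | 0 ≤ ρ ∧ ∃ t : Fin n → ℝ, t +ᵥ ρ • C ⊆ K}

/-- Minkowski asymmetry `s(K) = R(-K, K)`. -/
noncomputable def asym {n : ℕ} (K : Set (Fin n → ℝ)) : ℝ := circR (-K) K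

/-- Diameter of `K` w.r.t. `C`: twice the maximal circumradius of a segment with endpoints in `K`. -/
noncomputable def diamC {n : ℕ} (K C : Set (Fin n → ℝ)) : ℝ :=
  sSup {d : ℝ | ∃ x ∈ K, ∃ y ∈ K, d = 2 * circR (segment ℝ x y) C}

/-- `K` is (diametrically) complete w.r.t. `C`. -/
def IsDiamComplete {n : ℕ} (K C : Set (Fin n → ℝ)) : Prop :=
  ∀ K' : Set (Fin n → ℝ), IsBody K' → K ⊂ K' → diamC K C < diamC K' C

/-- `S` is an `n`-simplex: convex hull of `n+1` affinely independent points. -/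
def IsSimplexBody {n : ℕ} (S : Set (Fin n → ℝ)) : Prop :=
  ∃ p : Fin (n + 1) → (Fin n → ℝ), AffineIndependent ℝ p ∧ S = convexHull ℝ (Set.range p)

/-- Support function of `C`. -/
noncomputable def supp {n : ℕ} (C : Set (Fin n → ℝ)) (a : Fin n → ℝ) : ℝ :=
  sSup {r : ℝ | ∃ x ∈ C, r = dotProduct a x}

/-- `A ⊆ₜ B`: `A` is contained in some translate of `B`. -/
def SubsetT {n : ℕ} (A B : Set (Fin n → ℝ)) : Prop := ∃ t : Fin n → ℝ, A ⊆ t +ᵥ B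

/-!
Write `B = C - C`, `D = D(S, C) / 2` and `s = s(C)`. Since `-C` lies in a translate of `s C`,
the body `B` lies in a translate of `(1 + s) C`, and `(1 + s) C` in a translate of `s B`; hence
`R(S, C) ≤ (1 + s) R(S, B)` and `(1 + s) r(S, B) ≤ s r(S, C)`. The homothety of ratio `-1/n`
about the centroid maps a simplex into itself, which gives `R(S, B) ≤ n / (n + 1) D`.
Completeness gives `r(S, B) ≥ D - R(S, B)`: a point whose `B`-distance to every point of `S` is
at most `D` can be adjoined to `S` without increasing the diameter, so it already lies in `S`.
With `R(S, C) = n s r(S, C)` these bounds pinch `R(S, C)` to `n (1 + s) D / (n + 1)`.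
-/
open Set Bornology

lemma le_of_forall_pos_le_of_continuous {f g : ℝ → ℝ} (hf : Continuous f) (hg : Continuous g)
    (h : ∀ ε > 0, f ε ≤ g ε) : f 0 ≤ g 0 :=
  ((isClosed_le hf hg).closure_subset_iff (s := Ioi 0)).2 h
    (show (0 : ℝ) ∈ closure (Ioi 0) by rw [closure_Ioi]; exact self_mem_Ici)

lemma mem_vadd_set_iff_sub_mem {E : Type*} [AddCommGroup E] {A : Set E} {t x : E} :
    x ∈ t +ᵥ A ↔ x - t ∈ A := by
  rw [mem_vadd_set_iff_neg_vadd_mem, vadd_eq_add, neg_add_eq_sub]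

section Pointwise

variable {E : Type*} [AddCommGroup E] [Module ℝ E]

lemma smul_set_sub_eq (a : ℝ) (A B : Set E) : a • (A - B) = a • A - a • B := by
  rw [sub_eq_add_neg, smul_add, smul_set_neg, ← sub_eq_add_neg]

lemma neg_mem_smul_set_sub_self {a : ℝ} {C : Set E} {v : E} (h : v ∈ a • (C - C)) :
    -v ∈ a • (C - C) := by
  have := neg_mem_neg.2 h
  rwa [← smul_set_neg, neg_sub] at this

lemma smul_set_subset_smul_set_of_le {B : Set E} (hB : Convex ℝ B) (h0 : (0 : E) ∈ B) {a b : ℝ}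
    (ha : 0 ≤ a) (hab : a ≤ b) : a • B ⊆ b • B :=
  calc a • B ⊆ a • B + (b - a) • B := subset_add_left _ (zero_mem_smul_set h0)
    _ = b • B := by rw [← hB.add_smul ha (sub_nonneg.2 hab), add_sub_cancel]

lemma homothety_centroid_mem_convexHull {n : ℕ} (hn : 0 < n) (p : Fin (n + 1) → E) {x : E}
    (hx : x ∈ convexHull ℝ (range p)) :
    AffineMap.homothety (Finset.univ.centroid ℝ p) (-(n : ℝ)⁻¹) x ∈ convexHull ℝ (range p) := by
  classical
  have hg : Finset.univ.centroid ℝ p = ((n : ℝ) + 1)⁻¹ • ∑ i, p i := by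
    rw [Finset.centroid_def, Finset.affineCombination_eq_linear_combination _ _ _
      (Finset.sum_centroidWeights_eq_one_of_card_ne_zero _ _ (by simp)), Finset.smul_sum]
    simp [Finset.centroidWeights_apply]
  set g := Finset.univ.centroid ℝ p
  -- the homothety sends each vertex to the centroid of the opposite facet
  have hvertex : ∀ j, AffineMap.homothety g (-(n : ℝ)⁻¹) (p j) ∈ convexHull ℝ (range p) := by
    intro j
    have hcard : ((Finset.univ.erase j).card : ℝ) = n := by simp
    have hmem := (Finset.univ.erase j).centerMass_mem_convexHull (R := ℝ) (w := fun _ => 1)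
      (fun _ _ => zero_le_one) (by simp [hn]) (fun i _ => mem_range_self (f := p) i)
    convert hmem using 1
    rw [Finset.centerMass, AffineMap.homothety_apply, vsub_eq_sub, vadd_eq_add, hg,
      ← Finset.add_sum_erase _ _ (Finset.mem_univ j)]
    simp only [Finset.sum_const, hcard, one_smul, nsmul_eq_mul, mul_one]
    have : (n : ℝ) ≠ 0 := by positivity
    match_scalars <;> field_simp <;> ring
  have himage : AffineMap.homothety g (-(n : ℝ)⁻¹) '' convexHull ℝ (range p) ⊆
      convexHull ℝ (range p) := by
    rw [AffineMap.image_convexHull, ← range_comp]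
    exact convexHull_min (range_subset_iff.2 hvertex) (convex_convexHull ℝ _)
  exact himage (mem_image_of_mem _ hx)

end Pointwise

lemma nontrivial_of_interior_nonempty {E : Type*} [NormedAddCommGroup E] [NormedSpace ℝ E]
    [Nontrivial E] {K : Set E} (h : (interior K).Nonempty) : K.Nontrivial := by
  by_contra hK
  obtain ⟨x, hx⟩ := h
  rcases (not_nontrivial_iff.1 hK).eq_empty_or_singleton with rfl | ⟨y, rfl⟩
  · simp at hx
  · simp [interior_singleton] at hx

lemma isCompact_convexJoin {E : Type*} [NormedAddCommGroup E] [NormedSpace ℝ E] {s t : Set E}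
    (hs : IsCompact s) (ht : IsCompact t) : IsCompact (convexJoin ℝ s t) := by
  have : convexJoin ℝ s t =
      (fun q : (E × E) × ℝ => (1 - q.2) • q.1.1 + q.2 • q.1.2) '' ((s ×ˢ t) ×ˢ Icc 0 1) := by
    ext z
    simp only [mem_convexJoin, segment_eq_image, mem_image, mem_prod, Prod.exists]
    aesop
  rw [this]
  exact ((hs.prod ht).prod isCompact_Icc).image (by fun_prop)

section Translates

variable {n : ℕ} {A B D K C : Set (Fin n → ℝ)}

lemma SubsetT.trans (hAB : SubsetT A B) (hBD : SubsetT B D) : SubsetT A D := by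
  obtain ⟨t, ht⟩ := hAB
  obtain ⟨u, hu⟩ := hBD
  exact ⟨t + u, ht.trans ((vadd_set_mono hu).trans (vadd_vadd t u D).subset)⟩

lemma SubsetT.smul (a : ℝ) (h : SubsetT A B) : SubsetT (a • A) (a • B) := by
  obtain ⟨t, ht⟩ := h
  refine ⟨a • t, ?_⟩
  rintro _ ⟨x, hx, rfl⟩
  obtain ⟨b, hb, rfl⟩ := ht hx
  exact ⟨a • b, smul_mem_smul_set hb, by simp [smul_add]⟩

lemma subsetT_iff_exists_vadd_subset : SubsetT A B ↔ ∃ t : Fin n → ℝ, t +ᵥ A ⊆ B := by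
  simp only [SubsetT, subset_vadd_set_iff]
  exact ⟨fun ⟨t, h⟩ => ⟨-t, h⟩, fun ⟨t, h⟩ => ⟨-t, by rwa [neg_neg]⟩⟩

lemma subsetT_smul_smul (hC : Convex ℝ C) (hCne : C.Nonempty) {ρ ρ' : ℝ} (hρ : 0 ≤ ρ)
    (hle : ρ ≤ ρ') : SubsetT (ρ • C) (ρ' • C) := by
  obtain ⟨c, hc⟩ := hCne
  refine subsetT_iff_exists_vadd_subset.2 ⟨(ρ' - ρ) • c, ?_⟩
  calc (ρ' - ρ) • c +ᵥ ρ • C ⊆ ρ • C + (ρ' - ρ) • C := by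
        rintro _ ⟨x, hx, rfl⟩
        simpa only [vadd_eq_add, add_comm] using
          add_mem_add hx (smul_mem_smul_set (a := ρ' - ρ) hc)
    _ = ρ' • C := by rw [← hC.add_smul hρ (sub_nonneg.2 hle), add_sub_cancel]

lemma exists_subsetT_smul (hK : IsBounded K) (hC : (interior C).Nonempty) :
    ∃ ρ : ℝ, 0 < ρ ∧ SubsetT K (ρ • C) := by
  obtain ⟨c, hc⟩ := hC
  obtain ⟨δ, hδ, hball⟩ := Metric.mem_nhds_iff.1 (mem_interior_iff_mem_nhds.1 hc)
  obtain ⟨M, hM⟩ := hK.subset_closedBall 0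
  set ρ := (|M| + 1) / δ
  have hρ : 0 < ρ := by positivity
  refine ⟨ρ, hρ, -(ρ • c), fun x hx => ?_⟩
  rw [mem_vadd_set_iff_sub_mem, sub_neg_eq_add]
  refine smul_set_mono hball ?_
  rw [smul_ball hρ.ne', Metric.mem_ball, dist_eq_norm, add_sub_cancel_right,
    Real.norm_of_nonneg hρ.le, div_mul_cancel₀ _ hδ.ne']
  have := mem_closedBall_zero_iff.1 (hM hx)
  linarith [le_abs_self M]

lemma circR_nonneg (K C : Set (Fin n → ℝ)) : 0 ≤ circR K C :=
  Real.sInf_nonneg fun _ h => h.1.le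

lemma circR_le {ρ : ℝ} (hρ : 0 < ρ) (h : SubsetT K (ρ • C)) : circR K C ≤ ρ :=
  csInf_le ⟨0, fun _ h => h.1.le⟩ ⟨hρ, h⟩

lemma subsetT_smul_of_circR_lt (hK : IsBounded K) (hC : Convex ℝ C) (hCi : (interior C).Nonempty)
    {ρ : ℝ} (h : circR K C < ρ) : SubsetT K (ρ • C) := by
  obtain ⟨ρ₀, hρ₀, h₀⟩ := exists_subsetT_smul hK hCi
  obtain ⟨ρ₁, ⟨hρ₁, h₁⟩, hlt⟩ :=
    exists_lt_of_csInf_lt (s := {ρ | 0 < ρ ∧ SubsetT K (ρ • C)}) ⟨ρ₀, hρ₀, h₀⟩ h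
  exact SubsetT.trans h₁ (subsetT_smul_smul hC (hCi.mono interior_subset) hρ₁.le hlt.le)

lemma inrad_nonneg (K C : Set (Fin n → ℝ)) : 0 ≤ inrad K C :=
  Real.sSup_nonneg fun _ h => h.1

lemma le_inrad (hK : IsBounded K) (hC : C.Nontrivial) {ρ : ℝ} (hρ : 0 ≤ ρ)
    (h : SubsetT (ρ • C) K) : ρ ≤ inrad K C := by
  refine le_csSup ?_ ⟨hρ, subsetT_iff_exists_vadd_subset.1 h⟩
  obtain ⟨c₁, hc₁, c₂, hc₂, hne⟩ := hC
  refine ⟨Metric.diam K / ‖c₁ - c₂‖, ?_⟩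
  rintro ρ ⟨hρ, t, ht⟩
  rw [le_div_iff₀ (norm_pos_iff.2 (sub_ne_zero.2 hne))]
  calc ρ * ‖c₁ - c₂‖ = dist (t +ᵥ ρ • c₁) (t +ᵥ ρ • c₂) := by
        rw [dist_eq_norm, vadd_eq_add, vadd_eq_add, add_sub_add_left_eq_sub, ← smul_sub,
          norm_smul, Real.norm_of_nonneg hρ]
    _ ≤ Metric.diam K := Metric.dist_le_diam_of_mem hK
        (ht (vadd_mem_vadd_set (smul_mem_smul_set hc₁)))
        (ht (vadd_mem_vadd_set (smul_mem_smul_set hc₂)))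

lemma inrad_le {a : ℝ} (ha : 0 ≤ a) (h : ∀ ρ, 0 ≤ ρ → SubsetT (ρ • C) K → ρ ≤ a) :
    inrad K C ≤ a :=
  Real.sSup_le (fun ρ hρ => h ρ hρ.1 (subsetT_iff_exists_vadd_subset.2 hρ.2)) ha

end Translates

section Diameter

variable {n : ℕ} {K C : Set (Fin n → ℝ)}

lemma segment_subsetT_smul_iff (hC : Convex ℝ C) {x y : Fin n → ℝ} {ρ : ℝ} :
    SubsetT (segment ℝ x y) (ρ • C) ↔ x - y ∈ ρ • (C - C) := by
  rw [smul_set_sub_eq]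
  constructor
  · rintro ⟨t, ht⟩
    have hx := mem_vadd_set_iff_sub_mem.1 (ht (left_mem_segment ℝ x y))
    have hy := mem_vadd_set_iff_sub_mem.1 (ht (right_mem_segment ℝ x y))
    simpa using sub_mem_sub hx hy
  · rintro ⟨a, ha, b, hb, hab : a - b = x - y⟩
    refine ⟨x - a, ((hC.smul ρ).vadd _).segment_subset ?_ ?_⟩
    · rwa [mem_vadd_set_iff_sub_mem, sub_sub_cancel]
    · rwa [mem_vadd_set_iff_sub_mem, show y - (x - a) = b by rw [← sub_sub_cancel a b, hab]; abel]

lemma diamC_nonneg (K C : Set (Fin n → ℝ)) : 0 ≤ diamC K C := by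
  refine Real.sSup_nonneg ?_
  rintro _ ⟨x, -, y, -, rfl⟩
  have := circR_nonneg (segment ℝ x y) C
  positivity

lemma diamC_le_iff (hK : IsBounded K) (hC : Convex ℝ C) (hCi : (interior C).Nonempty) {D : ℝ}
    (hD : 0 ≤ D) : diamC K C ≤ 2 * D ↔ ∀ ρ > D, K - K ⊆ ρ • (C - C) := by
  constructor
  · rintro hdiam ρ hρ _ ⟨x, hx, y, hy, rfl⟩
    have hbdd : BddAbove {d | ∃ x ∈ K, ∃ y ∈ K, d = 2 * circR (segment ℝ x y) C} := by
      obtain ⟨ρ₀, hρ₀, t, ht⟩ := exists_subsetT_smul hK hCi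
      refine ⟨2 * ρ₀, ?_⟩
      rintro _ ⟨x, hx, y, hy, rfl⟩
      have := circR_le hρ₀ ⟨t, ((hC.smul ρ₀).vadd t).segment_subset (ht hx) (ht hy)⟩
      linarith
    have hseg : 2 * circR (segment ℝ x y) C ≤ diamC K C := le_csSup hbdd ⟨x, hx, y, hy, rfl⟩
    have hsegb : IsBounded (segment ℝ x y) := by
      rw [← convexHull_pair]
      exact isBounded_convexHull.2 (toFinite _).isBounded
    exact (segment_subsetT_smul_iff hC).1
      (subsetT_smul_of_circR_lt hsegb hC hCi (by linarith))
  · intro h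
    refine Real.sSup_le ?_ (by positivity)
    rintro _ ⟨x, hx, y, hy, rfl⟩
    have : circR (segment ℝ x y) C ≤ D := le_of_forall_gt_imp_ge_of_dense fun ρ hρ =>
      circR_le (hD.trans_lt hρ) ((segment_subsetT_smul_iff hC).2 (h ρ hρ (sub_mem_sub hx hy)))
    linarith

lemma diamC_pos (hK : IsBounded K) (hKnt : K.Nontrivial) (hC : Convex ℝ C) (hCb : IsBounded C)
    (hCi : (interior C).Nonempty) : 0 < diamC K C := by
  obtain ⟨x, hx, y, hy, hne⟩ := hKnt
  by_contra! hle
  obtain ⟨M, hM⟩ := (hCb.sub hCb).subset_closedBall 0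
  have hsub := (diamC_le_iff hK hC hCi le_rfl).1 (by linarith)
  have hxy : ∀ ε > 0, ‖x - y‖ ≤ ε * M := by
    intro ε hε
    obtain ⟨v, hv, hxy⟩ := hsub ε hε (sub_mem_sub hx hy)
    rw [← hxy, norm_smul, Real.norm_of_nonneg hε.le]
    exact mul_le_mul_of_nonneg_left (mem_closedBall_zero_iff.1 (hM hv)) hε.le
  have := le_of_forall_pos_le_of_continuous (f := fun _ => ‖x - y‖) (g := fun ε => ε * M)
    continuous_const (by fun_prop) hxy
  simp only [zero_mul] at this
  exact hne (sub_eq_zero.1 (norm_le_zero_iff.1 this))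

end Diameter

section DifferenceBody

variable {n : ℕ} {K C : Set (Fin n → ℝ)}

lemma zero_mem_sub_self (hC : C.Nonempty) : (0 : Fin n → ℝ) ∈ C - C := by
  obtain ⟨c, hc⟩ := hC
  exact ⟨c, hc, c, hc, sub_self c⟩

lemma interior_sub_self_nonempty (hC : (interior C).Nonempty) : (interior (C - C)).Nonempty :=
  (hC.sub (hC.mono interior_subset)).mono subset_interior_sub_left

lemma Set.Nontrivial.sub_self (hC : C.Nontrivial) : (C - C).Nontrivial := by
  obtain ⟨a, ha, b, hb, hne⟩ := hC
  refine ⟨a - b, sub_mem_sub ha hb, a - a, sub_mem_sub ha ha, ?_⟩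
  rw [_root_.sub_self]
  exact sub_ne_zero.2 hne

lemma subsetT_sub_self_one_add_smul (hC : Convex ℝ C) {σ : ℝ} (hσ : 0 ≤ σ)
    (h : SubsetT (-C) (σ • C)) : SubsetT (C - C) ((1 + σ) • C) := by
  obtain ⟨t, ht⟩ := h
  refine ⟨t, fun x hx => ?_⟩
  obtain ⟨a, ha, b, hb, rfl⟩ := mem_sub.1 hx
  obtain ⟨c, hc, hbc : σ • c = -b - t⟩ := mem_vadd_set_iff_sub_mem.1 (ht (neg_mem_neg.2 hb))
  rw [mem_vadd_set_iff_sub_mem, hC.add_smul zero_le_one hσ, one_smul]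
  exact ⟨a, ha, σ • c, smul_mem_smul_set hc, by simp only [hbc]; abel⟩

lemma subsetT_one_add_smul_smul_sub_self (hC : Convex ℝ C) {σ : ℝ} (hσ : 0 ≤ σ)
    (h : SubsetT (-C) (σ • C)) : SubsetT ((1 + σ) • C) (σ • (C - C)) := by
  obtain ⟨t, ht⟩ := h
  refine ⟨-t, ?_⟩
  rw [hC.add_smul zero_le_one hσ, one_smul]
  intro x hx
  obtain ⟨a, ha, _, ⟨b, hb, rfl⟩, rfl⟩ := mem_add.1 hx
  obtain ⟨c, hc, hac : σ • c = -a - t⟩ := mem_vadd_set_iff_sub_mem.1 (ht (neg_mem_neg.2 ha))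
  rw [mem_vadd_set_iff_sub_mem, smul_set_sub_eq]
  exact ⟨σ • b, smul_mem_smul_set hb, σ • c, smul_mem_smul_set hc, by simp only [hac]; abel⟩

lemma asym_nonneg (C : Set (Fin n → ℝ)) : 0 ≤ asym C := circR_nonneg (-C) C

lemma circR_le_one_add_asym_mul_circR_sub_self (hK : IsBounded K) (hC : Convex ℝ C)
    (hCb : IsBounded C) (hCi : (interior C).Nonempty) :
    circR K C ≤ (1 + asym C) * circR K (C - C) := by
  have key : ∀ ε > 0, circR K C ≤ (1 + (asym C + ε)) * (circR K (C - C) + ε) := by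
    intro ε hε
    have hKB := subsetT_smul_of_circR_lt hK (hC.sub hC) (interior_sub_self_nonempty hCi)
      (lt_add_of_pos_right (circR K (C - C)) hε)
    have hCC := subsetT_smul_of_circR_lt hCb.neg hC hCi (lt_add_of_pos_right (asym C) hε)
    have := asym_nonneg C
    have := circR_nonneg K (C - C)
    refine circR_le (by positivity) ?_
    rw [mul_comm, ← smul_smul]
    exact hKB.trans ((subsetT_sub_self_one_add_smul hC (by positivity) hCC).smul _)
  simpa using le_of_forall_pos_le_of_continuous (f := fun _ => circR K C)
    (g := fun ε => (1 + (asym C + ε)) * (circR K (C - C) + ε)) continuous_const (by fun_prop) key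

lemma one_add_asym_mul_inrad_sub_self_le (hK : IsBounded K) (hC : Convex ℝ C)
    (hCb : IsBounded C) (hCi : (interior C).Nonempty) (hCnt : C.Nontrivial) :
    (1 + asym C) * inrad K (C - C) ≤ asym C * inrad K C := by
  have hs := asym_nonneg C
  have key : ∀ ρ, 0 ≤ ρ → SubsetT (ρ • (C - C)) K → (1 + asym C) * ρ ≤ asym C * inrad K C := by
    intro ρ hρ hρK
    suffices ∀ ε > 0, (1 + (asym C + ε)) * ρ ≤ (asym C + ε) * inrad K C by
      simpa using le_of_forall_pos_le_of_continuous (f := fun ε => (1 + (asym C + ε)) * ρ)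
        (g := fun ε => (asym C + ε) * inrad K C) (by fun_prop) (by fun_prop) this
    intro ε hε
    set σ := asym C + ε
    have hσ : 0 < σ := by positivity
    have hCC := subsetT_smul_of_circR_lt hCb.neg hC hCi (lt_add_of_pos_right (asym C) hε)
    have h1 := (subsetT_one_add_smul_smul_sub_self hC hσ.le hCC).smul (ρ / σ)
    rw [smul_smul, smul_smul, div_mul_cancel₀ _ hσ.ne'] at h1
    have h2 := le_inrad hK hCnt (by positivity) (h1.trans hρK)
    calc (1 + σ) * ρ = σ * (ρ / σ * (1 + σ)) := by field_simp
      _ ≤ σ * inrad K C := mul_le_mul_of_nonneg_left h2 hσ.le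
  have hs1 : 0 < 1 + asym C := by positivity
  rw [← le_div_iff₀' hs1]
  exact inrad_le (by have := inrad_nonneg K C; positivity) fun ρ hρ h =>
    (le_div_iff₀' hs1).2 (key ρ hρ h)

end DifferenceBody

section Complete

variable {n : ℕ} {S C : Set (Fin n → ℝ)}

lemma mem_of_subset_vadd_smul_half_diamC (hS : IsBody S) (hC : Convex ℝ C)
    (hCi : (interior C).Nonempty) (hcomp : IsDiamComplete S C) {p : Fin n → ℝ}
    (hp : S ⊆ p +ᵥ (diamC S C / 2) • (C - C)) : p ∈ S := by
  obtain ⟨hSc, hSk, hSi⟩ := hS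
  set D := diamC S C / 2 with hDdef
  have hD : 0 ≤ D := by have := diamC_nonneg S C; positivity
  have hB0 := zero_mem_sub_self (hCi.mono interior_subset)
  by_contra hpS
  set K := convexHull ℝ (insert p S) with hKdef
  have hSK : S ⊆ K := (subset_insert p S).trans (subset_convexHull ℝ _)
  have hK : IsBody K := by
    refine ⟨convex_convexHull ℝ _, ?_, hSi.mono (interior_mono hSK)⟩
    rw [hKdef, convexHull_insert (hSi.mono interior_subset), hSc.convexHull_eq]
    exact isCompact_convexJoin isCompact_singleton hSk
  have hlt := hcomp K hK
    ((ssubset_iff_of_subset hSK).2 ⟨p, subset_convexHull ℝ _ (mem_insert p S), hpS⟩)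
  have hKdiam : diamC K C ≤ 2 * D := by
    refine (diamC_le_iff hK.2.1.isBounded hC hCi hD).2 fun ρ hρ => ?_
    have hSS := (diamC_le_iff hSk.isBounded hC hCi hD).1 (by linarith) ρ hρ
    have hpS' : ∀ y ∈ S, y - p ∈ ρ • (C - C) := fun y hy =>
      smul_set_subset_smul_set_of_le (hC.sub hC) hB0 hD hρ.le (mem_vadd_set_iff_sub_mem.1 (hp hy))
    rw [← convexHull_sub]
    refine convexHull_min ?_ ((hC.sub hC).smul ρ)
    intro x hx
    obtain ⟨a, ha, b, hb, rfl⟩ := mem_sub.1 hx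
    rcases ha with rfl | ha <;> rcases hb with rfl | hb
    · rw [sub_self]
      exact zero_mem_smul_set hB0
    · simpa only [neg_sub] using neg_mem_smul_set_sub_self (hpS' b hb)
    · exact hpS' a ha
    · exact hSS (sub_mem_sub ha hb)
  linarith

lemma vadd_smul_sub_self_subset (hS : IsBody S) (hC : Convex ℝ C) (hCi : (interior C).Nonempty)
    (hcomp : IsDiamComplete S C) {q : Fin n → ℝ} {ρ : ℝ} (hρ : 0 ≤ ρ) (hρD : ρ ≤ diamC S C / 2)
    (hq : S ⊆ q +ᵥ ρ • (C - C)) : q +ᵥ (diamC S C / 2 - ρ) • (C - C) ⊆ S := by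
  intro x hx
  refine mem_of_subset_vadd_smul_half_diamC hS hC hCi hcomp fun y hy => ?_
  rw [mem_vadd_set_iff_sub_mem] at hx ⊢
  have hqx : q - x ∈ (diamC S C / 2 - ρ) • (C - C) := by
    simpa only [neg_sub] using neg_mem_smul_set_sub_self hx
  have := add_mem_add (mem_vadd_set_iff_sub_mem.1 (hq hy)) hqx
  rwa [← (hC.sub hC).add_smul hρ (sub_nonneg.2 hρD), add_sub_cancel, sub_add_sub_cancel] at this

lemma half_diamC_sub_circR_le_inrad (hS : IsBody S) (hC : Convex ℝ C)
    (hCi : (interior C).Nonempty) (hCnt : C.Nontrivial) (hcomp : IsDiamComplete S C) :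
    diamC S C / 2 - circR S (C - C) ≤ inrad S (C - C) := by
  refine le_of_forall_pos_le_add fun ε hε => ?_
  set ρ := circR S (C - C) + ε
  have hρ : 0 ≤ ρ := by have := circR_nonneg S (C - C); positivity
  rcases le_or_gt ρ (diamC S C / 2) with hρD | hρD
  · obtain ⟨q, hq⟩ := subsetT_smul_of_circR_lt hS.2.1.isBounded (hC.sub hC)
      (interior_sub_self_nonempty hCi) (lt_add_of_pos_right (circR S (C - C)) hε)
    have := le_inrad hS.2.1.isBounded hCnt.sub_self (sub_nonneg.2 hρD)
      (subsetT_iff_exists_vadd_subset.2 ⟨q, vadd_smul_sub_self_subset hS hC hCi hcomp hρ hρD hq⟩)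
    linarith
  · linarith [inrad_nonneg S (C - C)]

end Complete

lemma IsSimplexBody.subsetT_smul {n : ℕ} {S A : Set (Fin n → ℝ)} (hS : IsSimplexBody S)
    (hn : 0 < n) (h : S - S ⊆ A) : SubsetT S (((n : ℝ) / (n + 1)) • A) := by
  obtain ⟨p, -, rfl⟩ := hS
  refine ⟨Finset.univ.centroid ℝ p, fun x hx => ?_⟩
  have hb := homothety_centroid_mem_convexHull hn p hx
  rw [mem_vadd_set_iff_sub_mem]
  refine ⟨_, h (sub_mem_sub hx hb), ?_⟩
  rw [AffineMap.homothety_apply, vsub_eq_sub, vadd_eq_add]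
  have : (n : ℝ) ≠ 0 := by positivity
  match_scalars <;> field_simp <;> ring

lemma IsSimplexBody.circR_sub_self_le {n : ℕ} {S C : Set (Fin n → ℝ)} (hS : IsSimplexBody S)
    (hn : 0 < n) (hSb : IsBounded S) (hC : Convex ℝ C) (hCi : (interior C).Nonempty) :
    circR S (C - C) ≤ n / (n + 1) * (diamC S C / 2) := by
  have hD : 0 ≤ diamC S C / 2 := by have := diamC_nonneg S C; positivity
  have key : ∀ ε > 0, circR S (C - C) ≤ n / (n + 1) * (diamC S C / 2 + ε) := by
    intro ε hε
    have hSS := (diamC_le_iff hSb hC hCi hD).1 (by linarith) _ (lt_add_of_pos_right _ hε)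
    refine circR_le (by positivity) ?_
    rw [← smul_smul]
    exact hS.subsetT_smul hn hSS
  simpa using le_of_forall_pos_le_of_continuous (f := fun _ => circR S (C - C))
    (g := fun ε => n / (n + 1) * (diamC S C / 2 + ε)) continuous_const (by fun_prop) key

theorem stmt18 {n : ℕ} (S C : Set (Fin n → ℝ)) (hS : IsSimplexBody S) (hSbody : IsBody S)
    (hC : IsBody C) (hcomp : IsDiamComplete S C)
    (hRr : circR S C = n * asym C * inrad S C) :
    circR S C / diamC S C = n * (asym C + 1) / (2 * (n + 1)) := by
  rcases n.eq_zero_or_pos with rfl | hn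
  · simp [hRr]
  have : NeZero n := ⟨hn.ne'⟩
  obtain ⟨hCc, hCk, hCi⟩ := hC
  have hSb := hSbody.2.1.isBounded
  have hCnt := nontrivial_of_interior_nonempty hCi
  have hA := circR_le_one_add_asym_mul_circR_sub_self hSb hCc hCk.isBounded hCi
  have hB := one_add_asym_mul_inrad_sub_self_le hSb hCc hCk.isBounded hCi hCnt
  have hSimplex := hS.circR_sub_self_le hn hSb hCc hCi
  have hCompl := half_diamC_sub_circR_le_inrad hSbody hCc hCi hCnt hcomp
  have hΔ := diamC_pos hSb (nontrivial_of_interior_nonempty hSbody.2.2) hCc hCk.isBounded hCi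
  have hs := asym_nonneg C
  have hn' : (0 : ℝ) < n := by positivity
  set s := asym C
  set D := diamC S C / 2 with hD
  have hR : circR S C = n * (1 + s) / (n + 1) * D := by
    refine le_antisymm ?_ ?_
    · calc circR S C ≤ (1 + s) * circR S (C - C) := hA
        _ ≤ (1 + s) * (n / (n + 1) * D) := by gcongr
        _ = n * (1 + s) / (n + 1) * D := by ring
    · calc n * (1 + s) / (n + 1) * D = n * (1 + s) * (D - n / (n + 1) * D) := by
            field_simp; ring
        _ ≤ n * (1 + s) * (D - circR S (C - C)) := by gcongr
        _ ≤ n * ((1 + s) * inrad S (C - C)) := by rw [← mul_assoc]; gcongr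
        _ ≤ n * (s * inrad S C) := by gcongr
        _ = circR S C := by rw [hRr]; ring
  rw [hR, show diamC S C = 2 * D by rw [hD]; ring]
  have hDpos : 0 < D := by positivity
  field_simp
  ring
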